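/- Let H be a Hilbert space and let C, T be bounded linear operators on a space of H-valued functions such that C is bijective with causal inverse, T is causal, ‖C⁻¹‖‖T‖ < 1. If F vanishes on (−∞,a] then the unique solution U of (C + T)U = F (equivalently, the fixed point of U ↦ C⁻¹(F − TU)) vanishes on (−∞,a]. -/
import Mathlib


open Filter

/-- Causality of the fixed-point solution: let `E` be a Banach space (of
`H`-valued functions), `Cinv` (the causal inverse of `C`) and `T` bounded
operators with `‖Cinv‖ * ‖T‖ < 1`, and let `V` be a closed subspace (the
functions vanishing a.e. on `(-∞,a]`) invariant under `Cinv` and `T`. If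
`F ∈ V` (i.e. `F` vanishes on `(-∞,a]`), then the unique solution `U` of
`(C+T)U = F`, equivalently the unique fixed point of `U ↦ Cinv (F - T U)`,
also lies in `V`. -/
theorem fixed_point_causal {E : Type*} [NormedAddCommGroup E] [NormedSpace ℝ E]
    [CompleteSpace E]
    (Cinv T : E →L[ℝ] E) (hcontr : ‖Cinv‖ * ‖T‖ < 1)
    (V : Submodule ℝ E) (hVclosed : IsClosed (V : Set E))
    (hCinvV : ∀ v ∈ V, Cinv v ∈ V) (hTV : ∀ v ∈ V, T v ∈ V)
    (F : E) (hF : F ∈ V) :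
    (∃! U : E, U = Cinv (F - T U)) ∧
      ∀ U : E, U = Cinv (F - T U) → U ∈ V := by
  set Q : E → E := fun U => Cinv (F - T U) with hQdef
  set k : NNReal := ‖Cinv‖₊ * ‖T‖₊ with hk
  have hk1 : (k : ℝ) < 1 := by
    simpa [hk, NNReal.coe_mul, coe_nnnorm] using hcontr
  have hdist : ∀ x y : E, dist (Q x) (Q y) ≤ (k : ℝ) * dist x y := by
    intro x y
    simp only [hQdef, dist_eq_norm]
    have : Cinv (F - T x) - Cinv (F - T y) = Cinv (T y - T x) := by
      rw [← map_sub]; congr 1; abel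
    rw [this]
    calc ‖Cinv (T y - T x)‖ ≤ ‖Cinv‖ * ‖T y - T x‖ := Cinv.le_opNorm _
      _ = ‖Cinv‖ * ‖T (y - x)‖ := by rw [map_sub]
      _ ≤ ‖Cinv‖ * (‖T‖ * ‖y - x‖) := by
          exact mul_le_mul_of_nonneg_left (T.le_opNorm _) (norm_nonneg _)
      _ = (k : ℝ) * ‖x - y‖ := by
          rw [norm_sub_rev y x]; push_cast [hk]; ring
  have hQcontr : ContractingWith k Q :=
    ⟨hk1, LipschitzWith.of_dist_le_mul hdist⟩
  haveI : Nonempty E := ⟨0⟩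
  -- fixed point in V
  haveI : CompleteSpace V := hVclosed.completeSpace_coe
  have hQV : ∀ v ∈ V, Q v ∈ V := fun v hv =>
    hCinvV _ (V.sub_mem hF (hTV v hv))
  set QV : V → V := fun v => ⟨Q v, hQV v v.2⟩ with hQVdef
  have hQVcontr : ContractingWith k QV := by
    refine ⟨hk1, LipschitzWith.of_dist_le_mul fun x y => ?_⟩
    simpa [hQVdef, Subtype.dist_eq] using hdist x y
  haveI : Nonempty V := ⟨0⟩
  set v0 : V := ContractingWith.fixedPoint QV hQVcontr with hv0def
  have hv0 : QV v0 = v0 := ContractingWith.fixedPoint_isFixedPt hQVcontr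
  have hfix : Q (v0 : E) = (v0 : E) := congrArg Subtype.val hv0
  have huniq : ∀ U : E, U = Q U → U = (v0 : E) := by
    intro U hU
    exact hQcontr.fixedPoint_unique' hU.symm hfix
  refine ⟨⟨(v0 : E), hfix.symm, fun U hU => huniq U hU⟩, fun U hU => ?_⟩
  rw [huniq U hU]; exact v0.2
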